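/- arXiv:2601.21457 — 3 statements merged into one kernel-verified Lean document; each statement's English description precedes it below -/
import Mathlib

section
/- Let G be a graph with m edges, let ε ∈ (0,1), m̄ > 0 with m̄ ≥ m/4, and set k = √(2n√m̄/ε) and k' = min(k, m̄/(εk)), where n = |V|. Define V_H = {v : deg(v) > k} and V_{L2} = {v : k' < deg(v) ≤ k}. Then the number of edges with one endpoint in V_{L2} ∪ V_H and the other endpoint in V_H is at most 64·ε·m̄. -/
/-!
Every edge counted has the form `s(u, v)` with `deg u > k'` and `deg v > k`, so there are at most
`|{deg > k'}| · |{deg > k}|` of them, and by the handshake lemma `|{deg > t}| ≤ 2m / t ≤ 8 m̄ / t`.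
If `k ≥ n`, no vertex has degree above `k`. Otherwise `ε k² ≥ m̄`, because `ε k² < m̄` would force
`2n < √m̄` and then `k² = 2n√m̄/ε ≥ 4n²`; so `k' = m̄ / (ε k)` and the count is at most
`64 m̄² / (k k') = 64 ε m̄`.
-/

open Finset

lemma ncard_setOf_sym2_mk_le {V : Type*} [Finite V] (P Q : V → Prop) :
    {e : Sym2 V | ∃ u v, e = s(u, v) ∧ P u ∧ Q v}.ncard ≤ {u | P u}.ncard * {v | Q v}.ncard := by
  have hsub : {e : Sym2 V | ∃ u v, e = s(u, v) ∧ P u ∧ Q v}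
      ⊆ (fun p : V × V => s(p.1, p.2)) '' ({u | P u} ×ˢ {v | Q v}) := by
    rintro e ⟨u, v, rfl, hu, hv⟩
    exact ⟨(u, v), ⟨hu, hv⟩, rfl⟩
  rw [← Set.ncard_prod]
  exact (Set.ncard_le_ncard hsub).trans (Set.ncard_image_le)

namespace SimpleGraph

variable {V : Type*} [Fintype V] (G : SimpleGraph V) [DecidableRel G.Adj]

lemma ncard_setOf_lt_degree_mul_le (t : ℝ) :
    ({v | t < (G.degree v : ℝ)}.ncard : ℝ) * t ≤ 2 * #G.edgeFinset := by
  classical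
  rw [Set.ncard_eq_toFinset_card', Set.toFinset_ofPred]
  calc (#{v | t < (G.degree v : ℝ)} : ℝ) * t = ∑ _v ∈ {v | t < (G.degree v : ℝ)}, t := by
        rw [sum_const, nsmul_eq_mul]
    _ ≤ ∑ v ∈ {v | t < (G.degree v : ℝ)}, (G.degree v : ℝ) :=
        sum_le_sum fun v hv => (mem_filter.mp hv).2.le
    _ ≤ ∑ v, (G.degree v : ℝ) := sum_le_sum_of_subset_of_nonneg (subset_univ _) (by simp)
    _ = 2 * #G.edgeFinset := by exact_mod_cast G.sum_degrees_eq_twice_card_edges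

lemma setOf_lt_degree_eq_empty {t : ℝ} (ht : (Fintype.card V : ℝ) ≤ t) :
    {v | t < (G.degree v : ℝ)} = ∅ :=
  Set.eq_empty_of_forall_notMem fun v (hv : t < _) =>
    hv.not_ge ((Nat.cast_le.mpr (G.degree_lt_card_verts v).le).trans ht)

end SimpleGraph

lemma le_of_mul_sq_lt {n ε M k : ℝ} (hn : 0 ≤ n) (hε0 : 0 < ε) (hε1 : ε ≤ 1)
    (hk : k = √(2 * n * √M / ε)) (h : ε * k ^ 2 < M) : n ≤ k := by
  have hM : 0 < M := lt_of_le_of_lt (by positivity) h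
  have hsM : 0 < √M := Real.sqrt_pos.mpr hM
  have hk2 : k ^ 2 = 2 * n * √M / ε := by rw [hk]; exact Real.sq_sqrt (by positivity)
  have h2n : 2 * n < √M := by
    rw [hk2, mul_div_cancel₀ _ hε0.ne'] at h
    exact lt_of_mul_lt_mul_right (h.trans_eq (Real.mul_self_sqrt hM.le).symm) hsM.le
  rw [hk, Real.le_sqrt hn (by positivity), le_div_iff₀ hε0]
  nlinarith

lemma mul_le_sq_div_of_mul_le {a b x y c : ℝ} (ha : 0 ≤ a) (hx : 0 < x) (hy : 0 < y)
    (hax : a * x ≤ c) (hby : b * y ≤ c) : a * b ≤ c ^ 2 / (x * y) := by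
  rw [le_div_iff₀ (by positivity)]
  nlinarith [mul_nonneg ha hx.le]

theorem stmt1_general {V : Type*} [Fintype V] (G : SimpleGraph V)
    [DecidableRel G.Adj]
    (ε mbar : ℝ) (hε0 : 0 < ε) (hε1 : ε < 1) (hmbar : 0 < mbar)
    (hm : (G.edgeFinset.card : ℝ) / 4 ≤ mbar)
    (k k' : ℝ)
    (hk : k = Real.sqrt (2 * (Fintype.card V : ℝ) * Real.sqrt mbar / ε))
    (hk' : k' = min k (mbar / (ε * k))) :
    ({e : Sym2 V | e ∈ G.edgeSet ∧
        ∃ u v : V, e = s(u, v) ∧ k' < (G.degree u : ℝ) ∧ k < (G.degree v : ℝ)}.ncard : ℝ)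
      ≤ 64 * ε * mbar := by
  set a := {v | k' < (G.degree v : ℝ)}.ncard
  set b := {v | k < (G.degree v : ℝ)}.ncard
  have hcount : ({e : Sym2 V | e ∈ G.edgeSet ∧
      ∃ u v : V, e = s(u, v) ∧ k' < (G.degree u : ℝ) ∧ k < (G.degree v : ℝ)}.ncard : ℝ) ≤ a * b := by
    exact_mod_cast le_trans (Set.ncard_le_ncard fun _ => And.right) (ncard_setOf_sym2_mk_le _ _)
  rcases le_or_gt (Fintype.card V : ℝ) k with hnk | hkn
  · have hb : b = 0 := by simp [b, G.setOf_lt_degree_eq_empty hnk]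
    calc _ ≤ (a : ℝ) * b := hcount
      _ = 0 := by simp [hb]
      _ ≤ 64 * ε * mbar := by positivity
  have hbig : mbar ≤ ε * k ^ 2 :=
    not_lt.mp fun h => hkn.not_ge (le_of_mul_sq_lt (by positivity) hε0 hε1.le hk h)
  have hk0 : 0 < k := (hk ▸ Real.sqrt_nonneg _).lt_of_ne (by rintro rfl; linarith)
  have hk'eq : k' = mbar / (ε * k) := by
    rw [hk', min_eq_right ((div_le_iff₀ (by positivity)).mpr (by linarith))]
  have hk'0 : 0 < k' := by rw [hk'eq]; positivity
  calc _ ≤ (a : ℝ) * b := hcount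
    _ ≤ (8 * mbar) ^ 2 / (k' * k) :=
        mul_le_sq_div_of_mul_le (Nat.cast_nonneg a) hk'0 hk0
          (by linarith [G.ncard_setOf_lt_degree_mul_le k'])
          (by linarith [G.ncard_setOf_lt_degree_mul_le k])
    _ = 64 * ε * mbar := by rw [hk'eq]; field_simp; ring

/-- For `ε ∈ (0,1)`, `m̄ ≥ m/4`, with thresholds `k = √(2n√m̄/ε)` and
`k' = min(k, m̄/(εk))`, the number of edges of `G` with one endpoint of degree `> k'`
(i.e. in `V_{L2} ∪ V_H`) and the other endpoint of degree `> k` (i.e. in `V_H`)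
is at most `64 ε m̄`. -/
theorem stmt1 {V : Type*} [Fintype V] [DecidableEq V] (G : SimpleGraph V)
    [DecidableRel G.Adj]
    (ε mbar : ℝ) (hε0 : 0 < ε) (hε1 : ε < 1) (hmbar : 0 < mbar)
    (hm : (G.edgeFinset.card : ℝ) / 4 ≤ mbar)
    (k k' : ℝ)
    (hk : k = Real.sqrt (2 * (Fintype.card V : ℝ) * Real.sqrt mbar / ε))
    (hk' : k' = min k (mbar / (ε * k))) :
    ({e : Sym2 V | e ∈ G.edgeSet ∧
        ∃ u v : V, e = s(u, v) ∧ k' < (G.degree u : ℝ) ∧ k < (G.degree v : ℝ)}.ncard : ℝ)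
      ≤ 64 * ε * mbar :=
  stmt1_general G ε mbar hε0 hε1 hmbar hm k k' hk hk'
end

section
/- Let G be a graph with m edges, ε ∈ (0,1), m̄ ≥ m/4, and set k = √(2n√m̄/ε), k' = min(k, m̄/(εk)). Let m_LL be the number of edges with both endpoints of degree at most k, and m_{L1H} the number of edges with one endpoint of degree at most k' and the other of degree greater than k. Then m_LL + m_{L1H} ≥ m − 64·ε·m̄. -/
/-!
An edge counted neither in `m_LL` nor in `m_{L1H}` has an endpoint of degree `> k` and the
other of degree `> k'`, so by Markov's inequality for degrees there are at most
`(2m/k) (2m/k') = 4m² / (k k')` of them. Since `k k' = min (k², m̄/ε)`, it remains to check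
`4m² ≤ 64 ε m̄ · min (k², m̄/ε)`: against `m̄/ε` this is `m ≤ 4m̄`, and against
`k² = 2n√m̄/ε` it follows from `m ≤ n √m`, a consequence of `m ≤ n²`.
-/

open Finset

theorem mul_le_of_mul_le_of_sq_le {x y s t M c : ℝ} (hy : 0 ≤ y) (hs : 0 < s) (ht : 0 < t)
    (hxs : x * s ≤ M) (hyt : y * t ≤ M) (hM : M ^ 2 ≤ c * (s * t)) : x * y ≤ c := by
  refine le_of_mul_le_mul_right ?_ (mul_pos hs ht)
  calc x * y * (s * t) = (x * s) * (y * t) := by ring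
    _ ≤ M * M := mul_le_mul hxs hyt (mul_nonneg hy ht.le) ((mul_nonneg hy ht.le).trans hyt)
    _ = M ^ 2 := (sq M).symm
    _ ≤ c * (s * t) := hM

theorem sq_le_of_le_mul_sqrt {m n mbar : ℝ} (hm0 : 0 ≤ m) (hn : 0 ≤ n) (hmn : m ≤ n * √m)
    (hm : m ≤ 4 * mbar) : m ^ 2 ≤ 8 * n * mbar * √mbar := by
  have hmbar : 0 ≤ mbar := by linarith
  have hsqrt : √m ≤ 2 * √mbar := by
    rw [Real.sqrt_le_left (by positivity), mul_pow, Real.sq_sqrt hmbar]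
    linarith
  calc m ^ 2 = m * m := sq m
    _ ≤ (4 * mbar) * (n * √m) := mul_le_mul hm hmn hm0 (by positivity)
    _ ≤ (4 * mbar) * (n * (2 * √mbar)) := by gcongr
    _ = 8 * n * mbar * √mbar := by ring

theorem four_mul_sq_le_mul_min {ε m n mbar k : ℝ} (hε : 0 < ε) (hm0 : 0 ≤ m) (hn : 0 ≤ n)
    (hmn : m ≤ n * √m) (hm : m ≤ 4 * mbar) (hk0 : 0 < k) (hk : k ^ 2 = 2 * n * √mbar / ε) :
    4 * m ^ 2 ≤ 64 * ε * mbar * (k * min k (mbar / (ε * k))) := by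
  have hmbar : 0 ≤ mbar := by linarith
  have hmin : k * min k (mbar / (ε * k)) = min (k ^ 2) (mbar / ε) := by
    rw [mul_min_of_nonneg _ _ hk0.le]
    congr 1
    · ring
    · field_simp
  rw [hmin, mul_min_of_nonneg _ _ (by positivity)]
  refine le_min ?_ ?_
  · have hsq := sq_le_of_le_mul_sqrt hm0 hn hmn hm
    have : 64 * ε * mbar * k ^ 2 = 128 * n * mbar * √mbar := by rw [hk]; field_simp; ring
    have : 0 ≤ n * mbar * √mbar := by positivity
    linarith
  · have : 64 * ε * mbar * (mbar / ε) = 64 * mbar ^ 2 := by field_simp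
    nlinarith

namespace SimpleGraph

variable {V : Type*} [Fintype V] (G : SimpleGraph V) [DecidableRel G.Adj]

theorem card_filter_lt_degree_mul_le (t : ℝ) :
    (#{v | t < (G.degree v : ℝ)} : ℝ) * t ≤ 2 * #G.edgeFinset := by
  calc (#{v | t < (G.degree v : ℝ)} : ℝ) * t
      = #{v | t < (G.degree v : ℝ)} • t := by rw [nsmul_eq_mul]
    _ ≤ ∑ v ∈ {v | t < (G.degree v : ℝ)}, (G.degree v : ℝ) :=
        card_nsmul_le_sum _ _ _ fun v hv => (mem_filter.mp hv).2.le
    _ ≤ ∑ v, (G.degree v : ℝ) :=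
        sum_le_sum_of_subset_of_nonneg (subset_univ _) fun _ _ _ => by positivity
    _ = 2 * #G.edgeFinset := by exact_mod_cast G.sum_degrees_eq_twice_card_edges

theorem card_edgeFinset_le_card_mul_sqrt :
    (#G.edgeFinset : ℝ) ≤ Fintype.card V * √(#G.edgeFinset : ℝ) := by
  have hsqrt : √(#G.edgeFinset : ℝ) ≤ Fintype.card V := by
    rw [Real.sqrt_le_left (by positivity)]
    exact_mod_cast G.card_edgeFinset_le_card_choose_two.trans (Nat.choose_le_pow _ _)
  calc (#G.edgeFinset : ℝ) = √(#G.edgeFinset : ℝ) * √(#G.edgeFinset : ℝ) :=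
        (Real.mul_self_sqrt (by positivity)).symm
    _ ≤ Fintype.card V * √(#G.edgeFinset : ℝ) := by gcongr

theorem card_edgeFinset_le_ncard_add_ncard_add_mul (a b : ℝ) :
    #G.edgeFinset ≤
      {e : Sym2 V | e ∈ G.edgeSet ∧ ∀ v ∈ e, (G.degree v : ℝ) ≤ b}.ncard +
      {e : Sym2 V | e ∈ G.edgeSet ∧
        ∃ u v : V, e = s(u, v) ∧ (G.degree u : ℝ) ≤ a ∧ b < (G.degree v : ℝ)}.ncard +
      #{v | b < (G.degree v : ℝ)} * #{v | a < (G.degree v : ℝ)} := by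
  classical
  set low := {e : Sym2 V | e ∈ G.edgeSet ∧ ∀ v ∈ e, (G.degree v : ℝ) ≤ b}
  set mixed := {e : Sym2 V | e ∈ G.edgeSet ∧
        ∃ u v : V, e = s(u, v) ∧ (G.degree u : ℝ) ≤ a ∧ b < (G.degree v : ℝ)}
  set high : Finset V := {v | b < (G.degree v : ℝ)}
  set mid : Finset V := {v | a < (G.degree v : ℝ)}
  have hhigh : ∀ u v, G.Adj u v → b < G.degree v →
      s(u, v) ∈ mixed ∪ ↑(image₂ Sym2.mk high mid) := by
    intro u v huv hv
    by_cases hu : (G.degree u : ℝ) ≤ a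
    · exact Or.inl ⟨huv, u, v, rfl, hu, hv⟩
    · refine Or.inr (mem_image₂.mpr ⟨v, ?_, u, ?_, Sym2.eq_swap⟩)
      · simpa [high] using hv
      · simpa [mid] using hu
  have hcover : G.edgeSet ⊆ low ∪ (mixed ∪ ↑(image₂ Sym2.mk high mid)) := by
    intro e he
    induction e using Sym2.ind with | _ u v => ?_
    have huv : G.Adj u v := he
    by_cases hv : b < (G.degree v : ℝ)
    · exact Or.inr (hhigh u v huv hv)
    by_cases hu : b < (G.degree u : ℝ)
    · rw [Sym2.eq_swap]
      exact Or.inr (hhigh v u huv.symm hu)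
    · refine Or.inl ⟨huv, fun w hw => ?_⟩
      rcases Sym2.mem_iff.mp hw with rfl | rfl
      exacts [not_lt.mp hu, not_lt.mp hv]
  calc #G.edgeFinset = G.edgeSet.ncard := by rw [← coe_edgeFinset, Set.ncard_coe_finset]
    _ ≤ (low ∪ (mixed ∪ ↑(image₂ Sym2.mk high mid))).ncard :=
        Set.ncard_le_ncard hcover
    _ ≤ low.ncard + (mixed.ncard + (↑(image₂ Sym2.mk high mid) : Set (Sym2 V)).ncard) := by
        grw [Set.ncard_union_le, Set.ncard_union_le]
    _ ≤ low.ncard + mixed.ncard + #high * #mid := by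
        rw [Set.ncard_coe_finset, ← add_assoc]
        grw [card_image₂_le]

end SimpleGraph

theorem stmt2_general {V : Type*} [Fintype V] (G : SimpleGraph V)
    [DecidableRel G.Adj]
    (ε mbar : ℝ) (hε0 : 0 < ε)
    (hm : (G.edgeFinset.card : ℝ) / 4 ≤ mbar)
    (k k' : ℝ)
    (hk : k = Real.sqrt (2 * (Fintype.card V : ℝ) * Real.sqrt mbar / ε))
    (hk' : k' = min k (mbar / (ε * k)))
    (mLL mL1H : ℕ)
    (hmLL : mLL = {e : Sym2 V | e ∈ G.edgeSet ∧ ∀ v ∈ e, (G.degree v : ℝ) ≤ k}.ncard)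
    (hmL1H : mL1H = {e : Sym2 V | e ∈ G.edgeSet ∧
        ∃ u v : V, e = s(u, v) ∧ (G.degree u : ℝ) ≤ k' ∧ k < (G.degree v : ℝ)}.ncard) :
    (mLL : ℝ) + (mL1H : ℝ) ≥ (G.edgeFinset.card : ℝ) - 64 * ε * mbar := by
  rcases (Nat.cast_nonneg (α := ℝ) #G.edgeFinset).eq_or_lt with hempty | hm0
  · rw [← hempty] at hm ⊢
    have : 0 ≤ ε * mbar := mul_nonneg hε0.le (by linarith)
    have : (0 : ℝ) ≤ mLL + mL1H := by positivity
    linarith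
  have hmn := G.card_edgeFinset_le_card_mul_sqrt
  have hn : 0 < (Fintype.card V : ℝ) :=
    pos_of_mul_pos_left (hm0.trans_le hmn) (Real.sqrt_nonneg _)
  have hmbar : 0 < mbar := by linarith
  have hk0 : 0 < k := by rw [hk]; positivity
  have hk'0 : 0 < k' := by rw [hk']; positivity
  have hsq : k ^ 2 = 2 * (Fintype.card V : ℝ) * √mbar / ε := by
    rw [hk, Real.sq_sqrt (by positivity)]
  have hbound := four_mul_sq_le_mul_min hε0 hm0.le hn.le hmn (by linarith) hk0 hsq
  rw [← hk'] at hbound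
  have hbad := mul_le_of_mul_le_of_sq_le (c := 64 * ε * mbar) (Nat.cast_nonneg _) hk0 hk'0
    (G.card_filter_lt_degree_mul_le k) (G.card_filter_lt_degree_mul_le k') (by linarith)
  have hcover : (#G.edgeFinset : ℝ) ≤ mLL + mL1H +
      (#{v | k < (G.degree v : ℝ)} : ℝ) * #{v | k' < (G.degree v : ℝ)} := by
    rw [hmLL, hmL1H]
    exact_mod_cast G.card_edgeFinset_le_ncard_add_ncard_add_mul k' k
  linarith

/-- For `ε ∈ (0,1)`, `m̄ ≥ m/4`, with thresholds `k = √(2n√m̄/ε)` and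
`k' = min(k, m̄/(εk))`: letting `m_LL` be the number of edges with both endpoints of
degree at most `k` and `m_{L1H}` the number of edges with one endpoint of degree at
most `k'` and the other of degree greater than `k`, we have
`m_LL + m_{L1H} ≥ m − 64 ε m̄`. -/
theorem stmt2 {V : Type*} [Fintype V] [DecidableEq V] (G : SimpleGraph V)
    [DecidableRel G.Adj]
    (ε mbar : ℝ) (hε0 : 0 < ε) (hε1 : ε < 1) (hmbar : 0 < mbar)
    (hm : (G.edgeFinset.card : ℝ) / 4 ≤ mbar)
    (k k' : ℝ)
    (hk : k = Real.sqrt (2 * (Fintype.card V : ℝ) * Real.sqrt mbar / ε))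
    (hk' : k' = min k (mbar / (ε * k)))
    (mLL mL1H : ℕ)
    (hmLL : mLL = {e : Sym2 V | e ∈ G.edgeSet ∧ ∀ v ∈ e, (G.degree v : ℝ) ≤ k}.ncard)
    (hmL1H : mL1H = {e : Sym2 V | e ∈ G.edgeSet ∧
        ∃ u v : V, e = s(u, v) ∧ (G.degree u : ℝ) ≤ k' ∧ k < (G.degree v : ℝ)}.ncard) :
    (mLL : ℝ) + (mL1H : ℝ) ≥ (G.edgeFinset.card : ℝ) - 64 * ε * mbar :=
  stmt2_general G ε mbar hε0 hm k k' hk hk' mLL mL1H hmLL hmL1H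
end

section
/- Let G be a graph, k and k' degree thresholds with k' ≤ k. Sample a uniformly random vertex u of G, and (if deg(u) > 0) a uniformly random neighbor v of u. Define X = deg(u) if deg(u) ≤ k' and deg(v) > k, and X = 0 otherwise. Then E[X] = m_{L1H}/n and E[X²] ≤ k'·E[X], where m_{L1H} is the number of edges between vertices of degree at most k' and vertices of degree greater than k, and n is the number of vertices. -/
open Finset

lemma Finset.inv_card_mul_sum_ite_and {α : Type*} (s : Finset α) (p : Prop) [Decidable p]
    (q : α → Prop) [DecidablePred q] (c : ℝ) :
    (#s : ℝ)⁻¹ * ∑ v ∈ s, (if p ∧ q v then (#s : ℝ) * c else 0) =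
      if p then c * #(s.filter q) else 0 := by
  by_cases hp : p
  · rcases s.eq_empty_or_nonempty with rfl | hs
    · simp
    · have hs : (#s : ℝ) ≠ 0 := by exact_mod_cast hs.card_ne_zero
      simp only [hp, true_and, if_true, ← sum_filter, sum_const, nsmul_eq_mul]
      field_simp
  · simp [hp]

namespace SimpleGraph

variable {V : Type*} [Fintype V] (G : SimpleGraph V) [DecidableRel G.Adj]

lemma degree_inv_mul_sum_neighbor_ite_and (u : V) (p : Prop) [Decidable p]
    (q : V → Prop) [DecidablePred q] (c : ℝ) :
    (G.degree u : ℝ)⁻¹ * ∑ v ∈ G.neighborFinset u,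
        (if p ∧ q v then (G.degree u : ℝ) * c else 0) =
      if p then c * #((G.neighborFinset u).filter q) else 0 := by
  rw [← card_neighborFinset_eq_degree]
  exact Finset.inv_card_mul_sum_ite_and _ p q c

end SimpleGraph

open Classical in
theorem stmt6_general {V : Type*} [Fintype V] (G : SimpleGraph V) [DecidableRel G.Adj]
    (k k' : ℝ)
    (mL1H : ℕ)
    (hmL1H : mL1H = ∑ u ∈ Finset.univ.filter (fun u => (G.degree u : ℝ) ≤ k'),
        ((G.neighborFinset u).filter (fun v => k < (G.degree v : ℝ))).card)
    (EX EX2 : ℝ)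
    (hEX : EX = (1 / (Fintype.card V : ℝ)) * ∑ u : V, ((G.degree u : ℝ))⁻¹ *
        ∑ v ∈ G.neighborFinset u,
          (if (G.degree u : ℝ) ≤ k' ∧ k < (G.degree v : ℝ) then (G.degree u : ℝ) else 0))
    (hEX2 : EX2 = (1 / (Fintype.card V : ℝ)) * ∑ u : V, ((G.degree u : ℝ))⁻¹ *
        ∑ v ∈ G.neighborFinset u,
          (if (G.degree u : ℝ) ≤ k' ∧ k < (G.degree v : ℝ) then ((G.degree u : ℝ)) ^ 2 else 0)) :
    EX = (mL1H : ℝ) / (Fintype.card V : ℝ) ∧ EX2 ≤ k' * EX := by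
  set H : V → ℝ := fun u => #((G.neighborFinset u).filter (fun v => k < (G.degree v : ℝ)))
  have hEX' : EX = (Fintype.card V : ℝ)⁻¹ * ∑ u, if (G.degree u : ℝ) ≤ k' then H u else 0 := by
    rw [hEX, one_div]
    congr 1
    refine sum_congr rfl fun u _ => ?_
    simpa using G.degree_inv_mul_sum_neighbor_ite_and u _ (fun v => k < (G.degree v : ℝ)) 1
  have hEX2' : EX2 = (Fintype.card V : ℝ)⁻¹ *
      ∑ u, if (G.degree u : ℝ) ≤ k' then (G.degree u : ℝ) * H u else 0 := by
    rw [hEX2, one_div]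
    congr 1
    refine sum_congr rfl fun u _ => ?_
    simpa [sq] using G.degree_inv_mul_sum_neighbor_ite_and u _ (fun v => k < (G.degree v : ℝ))
      (G.degree u)
  constructor
  · rw [hEX', ← sum_filter, hmL1H, div_eq_inv_mul]
    push_cast
    rfl
  · rw [hEX2', hEX', mul_left_comm]
    refine mul_le_mul_of_nonneg_left ?_ (by positivity)
    rw [mul_sum]
    refine sum_le_sum fun u _ => ?_
    split_ifs with hu
    · exact mul_le_mul_of_nonneg_right hu (Nat.cast_nonneg _)
    · simp

open Classical in
/-- Sample a uniformly random vertex `u` of `G`, then a uniformly random neighbor `v`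
of `u` (when `deg u > 0`), and set `X = deg u` if `deg u ≤ k'` and `deg v > k`, and
`X = 0` otherwise.  Then `E[X] = m_{L1H}/n` and `E[X²] ≤ k'·E[X]`, where
`m_{L1H} = Σ_{u : deg u ≤ k'} deg_H(u)` and `n` is the number of vertices. -/
theorem stmt6 {V : Type*} [Fintype V] (G : SimpleGraph V) [DecidableRel G.Adj]
    (k k' : ℝ) (hk : k' ≤ k)
    (mL1H : ℕ)
    (hmL1H : mL1H = ∑ u ∈ Finset.univ.filter (fun u => (G.degree u : ℝ) ≤ k'),
        ((G.neighborFinset u).filter (fun v => k < (G.degree v : ℝ))).card)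
    (EX EX2 : ℝ)
    (hEX : EX = (1 / (Fintype.card V : ℝ)) * ∑ u : V, ((G.degree u : ℝ))⁻¹ *
        ∑ v ∈ G.neighborFinset u,
          (if (G.degree u : ℝ) ≤ k' ∧ k < (G.degree v : ℝ) then (G.degree u : ℝ) else 0))
    (hEX2 : EX2 = (1 / (Fintype.card V : ℝ)) * ∑ u : V, ((G.degree u : ℝ))⁻¹ *
        ∑ v ∈ G.neighborFinset u,
          (if (G.degree u : ℝ) ≤ k' ∧ k < (G.degree v : ℝ) then ((G.degree u : ℝ)) ^ 2 else 0)) :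
    EX = (mL1H : ℝ) / (Fintype.card V : ℝ) ∧ EX2 ≤ k' * EX :=
  stmt6_general G k k' mL1H hmL1H EX EX2 hEX hEX2
end
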